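/- arXiv:math/0510013 — 4 statements merged into one kernel-verified Lean document; each statement's English description precedes it below -/
import Mathlib

section
/- Let G be an n_p × n_e real matrix with entries in {0,1}, let B = GᵀG, and suppose the columns are ordered so that the diagonal entries satisfy B₁₁ ≥ B₂₂ ≥ ... ≥ B_{n_e,n_e}. Assume that for every row i of G, the number of 1 entries in that row is at most d (interpreted as the diameter bound: every path has length at most d). Then for every k, the k-th largest eigenvalue λ_k of B satisfies λ_k ≤ B_{kk} · d. -/
/-!
Courant–Fischer with an explicit test vector: the span of the top `k + 1` eigenvectors meets the
subspace of vectors vanishing on the first `k` coordinates in some `x ≠ 0`. On one side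
`xᵀBx ≥ λ_k ‖x‖²`. On the other, `xᵀBx = ‖Gx‖²`, and Cauchy–Schwarz on each row of `G` (at most
`d` nonzero entries) gives `‖Gx‖² ≤ d ∑ⱼ B_jj x_j²`, which is at most `d B_kk ‖x‖²` because `x`
is supported on the coordinates `j ≥ k`, where the diagonal is at most `B_kk`.
-/

open Matrix Finset

section Orthonormal

variable {ι n : Type*} [Fintype ι] [DecidableEq ι] [Fintype n] {u : ι → n → ℝ}

theorem sum_smul_dotProduct_sum_smul
    (hu : ∀ i j, u i ⬝ᵥ u j = if i = j then 1 else 0) (a b : ι → ℝ) :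
    (∑ i, a i • u i) ⬝ᵥ (∑ i, b i • u i) = ∑ i, a i * b i := by
  simp only [sum_dotProduct, dotProduct_sum, smul_dotProduct, dotProduct_smul, hu,
    smul_eq_mul, mul_ite, mul_one, mul_zero, sum_ite_eq', mem_univ, if_true]
  exact sum_congr rfl fun _ _ => mul_comm _ _

theorem sum_smul_dotProduct_self_pos
    (hu : ∀ i j, u i ⬝ᵥ u j = if i = j then 1 else 0) {c : ι → ℝ} (hc : c ≠ 0) :
    0 < (∑ i, c i • u i) ⬝ᵥ (∑ i, c i • u i) := by
  rw [sum_smul_dotProduct_sum_smul hu]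
  exact lt_of_le_of_ne (dotProduct_self_star_nonneg c)
    (Ne.symm (mt dotProduct_self_eq_zero.mp hc))

theorem mul_dotProduct_self_le_dotProduct_mulVec
    (hu : ∀ i j, u i ⬝ᵥ u j = if i = j then 1 else 0) {B : Matrix n n ℝ} {ev : ι → ℝ}
    (heig : ∀ i, B *ᵥ u i = ev i • u i) {μ : ℝ} (hμ : ∀ i, μ ≤ ev i) (c : ι → ℝ) :
    μ * ((∑ i, c i • u i) ⬝ᵥ (∑ i, c i • u i)) ≤
      (∑ i, c i • u i) ⬝ᵥ (B *ᵥ ∑ i, c i • u i) := by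
  have hBx : B *ᵥ ∑ i, c i • u i = ∑ i, (c i * ev i) • u i := by
    simp only [mulVec_sum, mulVec_smul, heig, smul_smul]
  rw [hBx, sum_smul_dotProduct_sum_smul hu, sum_smul_dotProduct_sum_smul hu, mul_sum]
  exact sum_le_sum fun i _ => by nlinarith [hμ i, mul_self_nonneg (c i)]

end Orthonormal

theorem exists_sum_smul_eq_zero_on_of_card_lt {ι n : Type*} [Fintype ι] (u : ι → n → ℝ)
    (t : Finset n) (ht : #t < Fintype.card ι) :
    ∃ c : ι → ℝ, c ≠ 0 ∧ ∀ j ∈ t, (∑ i, c i • u i) j = 0 := by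
  let M : Matrix t ι ℝ := fun j i => u i j
  have hker : LinearMap.ker M.mulVecLin ≠ ⊥ :=
    LinearMap.ker_ne_bot_of_finrank_lt (by simpa using ht)
  obtain ⟨c, hc, hc0⟩ := (Submodule.ne_bot_iff _).mp hker
  refine ⟨c, hc0, fun j hj => ?_⟩
  have : (M *ᵥ c) ⟨j, hj⟩ = 0 := congrFun (LinearMap.mem_ker.mp hc) ⟨j, hj⟩
  simpa [M, mulVec, dotProduct, mul_comm] using this

theorem dotProduct_transpose_mul_self_mulVec_le {m n : Type*} [Fintype m] [Fintype n]
    (G : Matrix m n ℝ) {d : ℕ} (hrow : ∀ i, #{j | G i j ≠ 0} ≤ d) (x : n → ℝ) :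
    x ⬝ᵥ ((Gᵀ * G) *ᵥ x) ≤ d * ∑ j, (Gᵀ * G) j j * x j ^ 2 := by
  have hrow_sq : ∀ i, (∑ j, G i j * x j) ^ 2 ≤ d * ∑ j, (G i j * x j) ^ 2 := fun i => by
    have hsupp : ∀ f : n → ℝ, (∀ j, G i j = 0 → f j = 0) →
        ∑ j with G i j ≠ 0, f j = ∑ j, f j :=
      fun f hf => sum_filter_of_ne fun j _ hj h => hj (hf j h)
    rw [← hsupp _ fun j h => by simp [h],
      ← hsupp (fun j => (G i j * x j) ^ 2) fun j h => by simp [h]]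
    exact sq_sum_le_card_mul_sum_sq.trans
      (mul_le_mul_of_nonneg_right (by exact_mod_cast hrow i) (sum_nonneg fun _ _ => sq_nonneg _))
  calc x ⬝ᵥ ((Gᵀ * G) *ᵥ x) = ∑ i, (∑ j, G i j * x j) ^ 2 := by
        rw [← mulVec_mulVec, dotProduct_mulVec, vecMul_transpose]
        simp only [dotProduct, mulVec, sq]
    _ ≤ ∑ i, d * ∑ j, (G i j * x j) ^ 2 := sum_le_sum fun i _ => hrow_sq i
    _ = d * ∑ j, (Gᵀ * G) j j * x j ^ 2 := by
        simp only [← mul_sum, mul_apply, transpose_apply, sum_mul]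
        rw [sum_comm]
        exact congrArg _ (sum_congr rfl fun j _ => sum_congr rfl fun i _ => by ring)

/-- Proposition 1, first part: λ_k ≤ B_{kk} · d. -/
theorem stmt0 (np ne d : ℕ) (G : Matrix (Fin np) (Fin ne) ℝ)
    (hG : ∀ i j, G i j = 0 ∨ G i j = 1)
    (hrow : ∀ i, (Finset.univ.filter fun j => G i j = 1).card ≤ d)
    (B : Matrix (Fin ne) (Fin ne) ℝ) (hB : B = Gᵀ * G)
    (hdiag : ∀ k l : Fin ne, k ≤ l → B l l ≤ B k k)
    (ev : Fin ne → ℝ) (u : Fin ne → Fin ne → ℝ)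
    (huorth : ∀ i j, (∑ t, u i t * u j t) = if i = j then (1:ℝ) else 0)
    (heig : ∀ i, B.mulVec (u i) = ev i • u i)
    (hev : Antitone ev) :
    ∀ k : Fin ne, ev k ≤ B k k * d := by
  intro k
  have hu : ∀ i j : Iic k, u i ⬝ᵥ u j = if i = j then 1 else 0 := fun i j =>
    (huorth i j).trans (if_congr Subtype.ext_iff.symm rfl rfl)
  obtain ⟨c, hc, hx⟩ := exists_sum_smul_eq_zero_on_of_card_lt (fun i : Iic k => u i) (Iio k)
    (by rw [Fintype.card_coe, Fin.card_Iic, Fin.card_Iio]; exact Nat.lt_succ_self _)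
  set x := ∑ i : Iic k, c i • u i
  have hrow' : ∀ i, #{j | G i j ≠ 0} ≤ d := fun i =>
    (congrArg card (filter_congr fun j _ => by rcases hG i j with h | h <;> simp [h])).le.trans
      (hrow i)
  have hdiag_sum : ∑ j, B j j * x j ^ 2 ≤ B k k * (x ⬝ᵥ x) := by
    rw [dotProduct, mul_sum]
    refine sum_le_sum fun j _ => ?_
    rcases lt_or_ge j k with hjk | hkj
    · simp [hx j (mem_Iio.mpr hjk)]
    · rw [← sq]
      exact mul_le_mul_of_nonneg_right (hdiag k j hkj) (sq_nonneg _)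
  refine le_of_mul_le_mul_right ?_ (sum_smul_dotProduct_self_pos hu hc)
  calc ev k * (x ⬝ᵥ x) ≤ x ⬝ᵥ (B *ᵥ x) :=
        mul_dotProduct_self_le_dotProduct_mulVec hu (fun i => heig i)
          (fun i => hev (mem_Iic.mp i.2)) c
    _ ≤ d * ∑ j, B j j * x j ^ 2 := hB ▸ dotProduct_transpose_mul_self_mulVec_le G hrow' x
    _ ≤ d * (B k k * (x ⬝ᵥ x)) := by gcongr
    _ = B k k * d * (x ⬝ᵥ x) := by ring
end

section
/- Let G be an n_p × n_e matrix with entries in {0,1}, B = GᵀG, diagonal ordered nonincreasingly (B₁₁ maximal), and suppose every row of G has at most d ones. Then for every k > 1, λ_k / λ₁ ≤ (B_{kk} / B₁₁) · d, where λ₁ ≥ λ₂ ≥ ... are the eigenvalues of B (assuming λ₁ > 0 and B₁₁ > 0). -/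
/-!
Write `B = Uᵀ diag(λ) U` with `U` orthogonal, so that `xᵀBx = ∑ λᵢ (Ux)ᵢ²` and `|Ux| = |x|`.
Testing with the first basis vector gives `B₁₁ ≤ λ₁`. For `λ_k`, a dimension count yields a
nonzero `x` supported on the coordinates `≥ k` whose `U`-coordinates beyond `k` vanish, so that
`λ_k |x|² ≤ xᵀBx`. Since `B` is symmetric and nonnegative, `2 xᵢxⱼ ≤ xᵢ² + xⱼ²` gives
`xᵀBx ≤ ∑ᵢ xᵢ² (∑ⱼ Bᵢⱼ)`, and for `B = GᵀG` the row sum `∑ⱼ Bᵢⱼ = ∑ₘ Gₘᵢ (∑ⱼ Gₘⱼ)` is at most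
`d Bᵢᵢ ≤ d B_kk` on the support of `x`. Hence `λ_k ≤ d B_kk`.
-/

open Matrix Finset

section Spectral

variable {ι : Type*} [Fintype ι] [DecidableEq ι] {B U : Matrix ι ι ℝ} {ev : ι → ℝ}

theorem Matrix.eq_transpose_mul_diagonal_mul_of_mulVec_eq (hU : U * Uᵀ = 1)
    (heig : ∀ i, B *ᵥ U i = ev i • U i) : B = Uᵀ * diagonal ev * U := by
  have hBU : B * Uᵀ = Uᵀ * diagonal ev := by
    ext a i
    rw [mul_diagonal]
    simpa [mul_apply, mulVec, dotProduct, mul_comm] using congrFun (heig i) a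
  calc B = B * (Uᵀ * U) := by rw [mul_eq_one_comm.mp hU, Matrix.mul_one]
    _ = Uᵀ * diagonal ev * U := by rw [← Matrix.mul_assoc, hBU]

theorem Matrix.dotProduct_mulVec_eq_sum_eigenvalue_mul_sq (hU : U * Uᵀ = 1)
    (heig : ∀ i, B *ᵥ U i = ev i • U i) (x : ι → ℝ) :
    x ⬝ᵥ B *ᵥ x = ∑ i, ev i * (U *ᵥ x) i ^ 2 := by
  rw [eq_transpose_mul_diagonal_mul_of_mulVec_eq hU heig, ← mulVec_mulVec, ← mulVec_mulVec,
    dotProduct_mulVec, vecMul_transpose]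
  simp only [dotProduct, mulVec_diagonal]
  exact Finset.sum_congr rfl fun i _ => by ring

theorem Matrix.dotProduct_self_mulVec_of_mul_transpose_eq_one (hU : U * Uᵀ = 1) (x : ι → ℝ) :
    (U *ᵥ x) ⬝ᵥ (U *ᵥ x) = x ⬝ᵥ x := by
  calc (U *ᵥ x) ⬝ᵥ (U *ᵥ x)
    _ = x ⬝ᵥ Uᵀ *ᵥ U *ᵥ x := by rw [dotProduct_mulVec x Uᵀ, vecMul_transpose]
    _ = x ⬝ᵥ x := by rw [mulVec_mulVec, mul_eq_one_comm.mp hU, one_mulVec]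

theorem Matrix.dotProduct_mulVec_le_of_eigenvalue_le (hU : U * Uᵀ = 1)
    (heig : ∀ i, B *ᵥ U i = ev i • U i) {M : ℝ} (hM : ∀ i, ev i ≤ M) (x : ι → ℝ) :
    x ⬝ᵥ B *ᵥ x ≤ M * (x ⬝ᵥ x) := by
  rw [dotProduct_mulVec_eq_sum_eigenvalue_mul_sq hU heig,
    ← dotProduct_self_mulVec_of_mul_transpose_eq_one hU x, dotProduct, Finset.mul_sum]
  refine Finset.sum_le_sum fun i _ => ?_
  rw [sq]
  exact mul_le_mul_of_nonneg_right (hM i) (mul_self_nonneg _)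

theorem Matrix.le_dotProduct_mulVec_of_le_eigenvalue (hU : U * Uᵀ = 1)
    (heig : ∀ i, B *ᵥ U i = ev i • U i) {m : ℝ} {x : ι → ℝ}
    (hm : ∀ i, (U *ᵥ x) i ≠ 0 → m ≤ ev i) :
    m * (x ⬝ᵥ x) ≤ x ⬝ᵥ B *ᵥ x := by
  rw [dotProduct_mulVec_eq_sum_eigenvalue_mul_sq hU heig,
    ← dotProduct_self_mulVec_of_mul_transpose_eq_one hU x, dotProduct, Finset.mul_sum]
  refine Finset.sum_le_sum fun i _ => ?_
  by_cases hi : (U *ᵥ x) i = 0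
  · simp [hi]
  · rw [sq]
    exact mul_le_mul_of_nonneg_right (hm i hi) (mul_self_nonneg _)

theorem Matrix.diag_le_of_eigenvalue_le (hU : U * Uᵀ = 1)
    (heig : ∀ i, B *ᵥ U i = ev i • U i) {M : ℝ} (hM : ∀ i, ev i ≤ M) (a : ι) : B a a ≤ M := by
  simpa using dotProduct_mulVec_le_of_eigenvalue_le hU heig hM (Pi.single a 1)

end Spectral

theorem Matrix.exists_ne_zero_vanishing_below_mulVec_vanishing_above {ι : Type*} [Fintype ι]
    [LinearOrder ι] (U : Matrix ι ι ℝ) (k : ι) :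
    ∃ x : ι → ℝ, x ≠ 0 ∧ (∀ j < k, x j = 0) ∧ ∀ i, k < i → (U *ᵥ x) i = 0 := by
  -- `card ι - 1` linear conditions on a `card ι`-dimensional space
  let L : (ι → ℝ) →ₗ[ℝ] ({j // j ≠ k} → ℝ) := LinearMap.pi fun j =>
    if (j : ι) < k then LinearMap.proj (j : ι) else LinearMap.proj (j : ι) ∘ₗ U.mulVecLin
  have hL : LinearMap.ker L ≠ ⊥ := LinearMap.ker_ne_bot_of_finrank_lt <| by
    simpa [Fintype.card_subtype_compl] using Fintype.card_pos_iff.mpr ⟨k⟩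
  obtain ⟨x, hxL, hx⟩ := Submodule.exists_mem_ne_zero_of_ne_bot hL
  refine ⟨x, hx, fun j hj => ?_, fun i hi => ?_⟩
  · simpa [L, hj] using congrFun (LinearMap.mem_ker.mp hxL) ⟨j, hj.ne⟩
  · simpa [L, hi.not_gt] using congrFun (LinearMap.mem_ker.mp hxL) ⟨i, hi.ne'⟩

theorem Matrix.dotProduct_mulVec_le_sum_sq_mul_sum_row {ι : Type*} [Fintype ι]
    {B : Matrix ι ι ℝ} (hB : B.IsSymm) (hnn : ∀ i j, 0 ≤ B i j) (x : ι → ℝ) :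
    x ⬝ᵥ B *ᵥ x ≤ ∑ i, x i ^ 2 * ∑ j, B i j := by
  have hswap : ∑ i, ∑ j, B i j * x j ^ 2 = ∑ i, ∑ j, B i j * x i ^ 2 := by
    rw [Finset.sum_comm]
    exact Finset.sum_congr rfl fun i _ => Finset.sum_congr rfl fun j _ => by rw [hB.apply i j]
  calc x ⬝ᵥ B *ᵥ x = ∑ i, ∑ j, B i j * (x i * x j) := by
        simp only [dotProduct, mulVec, Finset.mul_sum]
        exact Finset.sum_congr rfl fun i _ => Finset.sum_congr rfl fun j _ => by ring
    _ ≤ ∑ i, ∑ j, (B i j * x i ^ 2 + B i j * x j ^ 2) / 2 := by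
        gcongr with i _ j _
        nlinarith [hnn i j, mul_nonneg (hnn i j) (sq_nonneg (x i - x j))]
    _ = ∑ i, x i ^ 2 * ∑ j, B i j := by
        simp only [add_div, Finset.sum_add_distrib, ← Finset.sum_div]
        rw [hswap, add_halves]
        exact Finset.sum_congr rfl fun i _ => by
          rw [Finset.mul_sum]
          exact Finset.sum_congr rfl fun j _ => mul_comm _ _

theorem Matrix.eigenvalue_le_of_sum_row_le {ι : Type*} [Fintype ι] [DecidableEq ι]
    [LinearOrder ι] {B U : Matrix ι ι ℝ} {ev : ι → ℝ} (hU : U * Uᵀ = 1)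
    (heig : ∀ i, B *ᵥ U i = ev i • U i)
    (hev : Antitone ev) (hB : B.IsSymm) (hnn : ∀ i j, 0 ≤ B i j) (k : ι) {r : ℝ}
    (hrow : ∀ j, k ≤ j → ∑ l, B j l ≤ r) : ev k ≤ r := by
  obtain ⟨x, hx0, hx_lt, hUx_gt⟩ := U.exists_ne_zero_vanishing_below_mulVec_vanishing_above k
  have hxx : 0 < x ⬝ᵥ x :=
    lt_of_le_of_ne (Finset.sum_nonneg fun i _ => mul_self_nonneg (x i))
      (Ne.symm (dotProduct_self_eq_zero.not.mpr hx0))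
  refine le_of_mul_le_mul_right ?_ hxx
  calc ev k * (x ⬝ᵥ x) ≤ x ⬝ᵥ B *ᵥ x :=
        le_dotProduct_mulVec_of_le_eigenvalue hU heig fun i hi =>
          hev (not_lt.mp fun hki => hi (hUx_gt i hki))
    _ ≤ ∑ i, x i ^ 2 * ∑ j, B i j := dotProduct_mulVec_le_sum_sq_mul_sum_row hB hnn x
    _ ≤ ∑ i, x i ^ 2 * r := by
        refine Finset.sum_le_sum fun j _ => ?_
        rcases lt_or_ge j k with hj | hj
        · simp [hx_lt j hj]
        · exact mul_le_mul_of_nonneg_left (hrow j hj) (sq_nonneg _)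
    _ = r * (x ⬝ᵥ x) := by
        rw [dotProduct, Finset.mul_sum]
        exact Finset.sum_congr rfl fun i _ => by ring

theorem Matrix.sum_row_eq_card_of_zero_or_one {m ι : Type*} [Fintype ι] {G : Matrix m ι ℝ}
    (hG : ∀ i j, G i j = 0 ∨ G i j = 1) (i : m) :
    ∑ j, G i j = (Finset.univ.filter fun j => G i j = 1).card := by
  rw [Finset.card_filter, Nat.cast_sum]
  refine Finset.sum_congr rfl fun j _ => ?_
  rcases hG i j with h | h <;> simp [h]

theorem Matrix.transpose_mul_self_apply_self_of_zero_or_one {m ι : Type*} [Fintype m]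
    {G : Matrix m ι ℝ} (hG : ∀ i j, G i j = 0 ∨ G i j = 1)
    (a : ι) : (Gᵀ * G) a a = ∑ i, G i a := by
  refine Finset.sum_congr rfl fun i _ => ?_
  rcases hG i a with h | h <;> simp [h]

theorem Matrix.transpose_mul_self_apply_nonneg {m ι : Type*} [Fintype m] {G : Matrix m ι ℝ}
    (hG : ∀ i j, 0 ≤ G i j) (a b : ι) :
    0 ≤ (Gᵀ * G) a b :=
  Finset.sum_nonneg fun i _ => mul_nonneg (hG i a) (hG i b)

theorem Matrix.sum_transpose_mul_self_row_le {m ι : Type*} [Fintype m] [Fintype ι]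
    {G : Matrix m ι ℝ} (hG : ∀ i j, 0 ≤ G i j) {r : ℝ}
    (hrow : ∀ i, ∑ j, G i j ≤ r) (a : ι) : ∑ b, (Gᵀ * G) a b ≤ r * ∑ i, G i a := by
  calc ∑ b, (Gᵀ * G) a b = ∑ i, G i a * ∑ b, G i b := by
        simp only [mul_apply, transpose_apply, Finset.mul_sum]
        exact Finset.sum_comm
    _ ≤ ∑ i, G i a * r := by gcongr with i _; exacts [hG i a, hrow i]
    _ = r * ∑ i, G i a := by rw [Finset.mul_sum]; simp only [mul_comm]

theorem stmt1_general (np n d : ℕ) (G : Matrix (Fin np) (Fin (n+1)) ℝ)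
    (hG : ∀ i j, G i j = 0 ∨ G i j = 1)
    (hrow : ∀ i, (Finset.univ.filter fun j => G i j = 1).card ≤ d)
    (B : Matrix (Fin (n+1)) (Fin (n+1)) ℝ) (hB : B = Gᵀ * G)
    (hdiag : ∀ k l : Fin (n+1), k ≤ l → B l l ≤ B k k)
    (ev : Fin (n+1) → ℝ) (u : Fin (n+1) → Fin (n+1) → ℝ)
    (huorth : ∀ i j, (∑ t, u i t * u j t) = if i = j then (1:ℝ) else 0)
    (heig : ∀ i, B.mulVec (u i) = ev i • u i)
    (hev : Antitone ev)
    (hB11 : 0 < B 0 0) :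
    ∀ k : Fin (n+1), 0 < (k : ℕ) → ev k / ev 0 ≤ (B k k / B 0 0) * d := by
  intro k _
  have hG_nonneg : ∀ i j, 0 ≤ G i j := fun i j => by rcases hG i j with h | h <;> simp [h]
  have hU : of u * (of u)ᵀ = 1 := by
    ext i j
    simpa [mul_apply, one_apply] using huorth i j
  have hB_row : ∀ j, ∑ l, B j l ≤ d * B j j := fun j => by
    rw [hB, transpose_mul_self_apply_self_of_zero_or_one hG]
    refine sum_transpose_mul_self_row_le hG_nonneg (fun i => ?_) j
    rw [sum_row_eq_card_of_zero_or_one hG]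
    exact_mod_cast hrow i
  have hB_nonneg : ∀ a b, 0 ≤ B a b := hB ▸ transpose_mul_self_apply_nonneg hG_nonneg
  have hB00 : B 0 0 ≤ ev 0 := diag_le_of_eigenvalue_le hU heig (fun i => hev (Fin.zero_le i)) 0
  have hevk : ev k ≤ d * B k k :=
    eigenvalue_le_of_sum_row_le hU heig hev (by rw [hB, IsSymm, transpose_mul, transpose_transpose])
      hB_nonneg k fun j hkj =>
        (hB_row j).trans (mul_le_mul_of_nonneg_left (hdiag k j hkj) d.cast_nonneg)
  calc ev k / ev 0 ≤ d * B k k / ev 0 := div_le_div_of_nonneg_right hevk (hB11.trans_le hB00).le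
    _ ≤ d * B k k / B 0 0 :=
        div_le_div_of_nonneg_left (mul_nonneg d.cast_nonneg (hB_nonneg k k)) hB11 hB00
    _ = B k k / B 0 0 * d := by ring

/-- Proposition 1, Eq. (2): λ_k / λ₁ ≤ (B_{kk}/B₁₁) · d for k > 1. -/
theorem stmt1 (np n d : ℕ) (G : Matrix (Fin np) (Fin (n+1)) ℝ)
    (hG : ∀ i j, G i j = 0 ∨ G i j = 1)
    (hrow : ∀ i, (Finset.univ.filter fun j => G i j = 1).card ≤ d)
    (B : Matrix (Fin (n+1)) (Fin (n+1)) ℝ) (hB : B = Gᵀ * G)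
    (hdiag : ∀ k l : Fin (n+1), k ≤ l → B l l ≤ B k k)
    (ev : Fin (n+1) → ℝ) (u : Fin (n+1) → Fin (n+1) → ℝ)
    (huorth : ∀ i j, (∑ t, u i t * u j t) = if i = j then (1:ℝ) else 0)
    (heig : ∀ i, B.mulVec (u i) = ev i • u i)
    (hev : Antitone ev)
    (hlam1 : 0 < ev 0) (hB11 : 0 < B 0 0) :
    ∀ k : Fin (n+1), 0 < (k : ℕ) → ev k / ev 0 ≤ (B k k / B 0 0) * d :=
  stmt1_general np n d G hG hrow B hB hdiag ev u huorth heig hev hB11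
end

section
/- Let G and G̃ₛ be real matrices with n_e columns and suppose ‖GᵀG − G̃ₛᵀG̃ₛ‖_F ≤ f · ‖G‖_F² for some f ≥ 0. Let Pₛ be the orthogonal projection onto the span of the top k right singular vectors of G̃ₛ. Then ‖(I − Pₛ)Gᵀ‖₂² ≤ λ_{k+1} + 2 f ‖G‖_F², where λ_{k+1} = σ_{k+1}(G)² is the (k+1)-st largest eigenvalue of GᵀG. -/
open Matrix Finset

noncomputable def specNorm {m n : ℕ} (M : Matrix (Fin m) (Fin n) ℝ) : ℝ :=
  ‖LinearMap.toContinuousLinearMap (Matrix.toEuclideanLin M)‖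

noncomputable def frob {m n : ℕ} (M : Matrix (Fin m) (Fin n) ℝ) : ℝ :=
  Real.sqrt (∑ i, ∑ j, (M i j) ^ 2)

noncomputable def norm2 {n : ℕ} (v : Fin n → ℝ) : ℝ :=
  Real.sqrt (∑ i, v i ^ 2)

lemma aux_dot_nonneg {n : ℕ} (x : Fin n → ℝ) : 0 ≤ x ⬝ᵥ x := by
  simp only [dotProduct]
  exact Finset.sum_nonneg fun i _ => mul_self_nonneg _

lemma aux_dot_sum_right {n : ℕ} (x : Fin n → ℝ) (c : Fin n → ℝ) (w : Fin n → Fin n → ℝ) :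
    x ⬝ᵥ (∑ i, c i • w i) = ∑ i, c i * (x ⬝ᵥ w i) := by
  simp only [dotProduct, Finset.sum_apply, Pi.smul_apply, smul_eq_mul, Finset.mul_sum]
  rw [Finset.sum_comm]
  exact Finset.sum_congr rfl fun i _ => Finset.sum_congr rfl fun t _ => by ring

lemma aux_onb_dot {n : ℕ} (u : Fin n → Fin n → ℝ)
    (huorth : ∀ i j, (∑ t, u i t * u j t) = if i = j then (1:ℝ) else 0)
    (c : Fin n → ℝ) (j : Fin n) : u j ⬝ᵥ (∑ i, c i • u i) = c j := by
  rw [aux_dot_sum_right]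
  have hd : ∀ i, u j ⬝ᵥ u i = if j = i then (1:ℝ) else 0 := fun i => by
    simpa [dotProduct] using huorth j i
  simp only [hd, mul_ite, mul_one, mul_zero, Finset.sum_ite_eq, Finset.mem_univ, if_true]

lemma aux_dot_sum_sum {n : ℕ} (u : Fin n → Fin n → ℝ)
    (huorth : ∀ i j, (∑ t, u i t * u j t) = if i = j then (1:ℝ) else 0)
    (c d : Fin n → ℝ) :
    (∑ i, c i • u i) ⬝ᵥ (∑ j, d j • u j) = ∑ i, c i * d i := by
  rw [dotProduct_comm, aux_dot_sum_right]
  refine Finset.sum_congr rfl fun j _ => ?_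
  rw [dotProduct_comm, aux_onb_dot u huorth d j]

lemma aux_onb_expand {n : ℕ} (hn : 0 < n) (u : Fin n → Fin n → ℝ)
    (huorth : ∀ i j, (∑ t, u i t * u j t) = if i = j then (1:ℝ) else 0)
    (x : Fin n → ℝ) : ∃ c : Fin n → ℝ, x = ∑ i, c i • u i := by
  have li : LinearIndependent ℝ u := by
    rw [Fintype.linearIndependent_iff]
    intro g hg i
    have h := congrArg (fun y => u i ⬝ᵥ y) hg
    simpa [aux_onb_dot u huorth g i] using h
  haveI : Nonempty (Fin n) := ⟨⟨0, hn⟩⟩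
  have card : Fintype.card (Fin n) = Module.finrank ℝ (Fin n → ℝ) := by
    simp [Module.finrank_fin_fun]
  let b := basisOfLinearIndependentOfCardEqFinrank li card
  refine ⟨b.repr x, ?_⟩
  have hbu : ∀ i, b i = u i := fun i =>
    congrFun (coe_basisOfLinearIndependentOfCardEqFinrank li card) i
  calc x = ∑ i, (b.repr x) i • b i := (b.sum_repr x).symm
    _ = ∑ i, (b.repr x) i • u i := Finset.sum_congr rfl fun i _ => by rw [hbu i]

lemma aux_qf_repr {n : ℕ} (H : Matrix (Fin n) (Fin n) ℝ) (ev : Fin n → ℝ)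
    (u : Fin n → Fin n → ℝ)
    (huorth : ∀ i j, (∑ t, u i t * u j t) = if i = j then (1:ℝ) else 0)
    (heig : ∀ i, H *ᵥ u i = ev i • u i) (c : Fin n → ℝ) :
    (∑ i, c i • u i) ⬝ᵥ (H *ᵥ (∑ i, c i • u i)) = ∑ i, ev i * (c i * c i) := by
  have h1 : H *ᵥ (∑ i, c i • u i) = ∑ i, (ev i * c i) • u i := by
    have h2 : H *ᵥ (∑ i, c i • u i) = ∑ i, c i • (H *ᵥ u i) := by
      simp only [← Matrix.mulVecLin_apply]
      rw [map_sum]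
      exact Finset.sum_congr rfl fun i _ => H.mulVecLin.map_smul _ _
    rw [h2]
    refine Finset.sum_congr rfl fun i _ => ?_
    rw [heig i, smul_smul, mul_comm]
  rw [h1, aux_dot_sum_sum u huorth]
  exact Finset.sum_congr rfl fun i _ => by ring

lemma aux_qf_le {n k' : ℕ} (hk' : k' < n)
    (H : Matrix (Fin n) (Fin n) ℝ) (ev : Fin n → ℝ) (u : Fin n → Fin n → ℝ)
    (huorth : ∀ i j, (∑ t, u i t * u j t) = if i = j then (1:ℝ) else 0)
    (heig : ∀ i, H *ᵥ u i = ev i • u i) (hev : Antitone ev)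
    (x : Fin n → ℝ) (hx : ∀ i : Fin n, (i:ℕ) < k' → u i ⬝ᵥ x = 0) :
    x ⬝ᵥ (H *ᵥ x) ≤ ev ⟨k', hk'⟩ * (x ⬝ᵥ x) := by
  obtain ⟨c, rfl⟩ := aux_onb_expand (by omega) u huorth x
  rw [aux_qf_repr H ev u huorth heig c, aux_dot_sum_sum u huorth, Finset.mul_sum]
  refine Finset.sum_le_sum fun i _ => ?_
  by_cases h : (i:ℕ) < k'
  · have hz : c i = 0 := by
      have := hx i h
      rwa [aux_onb_dot u huorth] at this
    simp [hz]
  · have hle : ev i ≤ ev ⟨k', hk'⟩ := hev (by rw [Fin.le_def]; exact Nat.le_of_not_lt h)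
    nlinarith [mul_self_nonneg (c i)]

lemma aux_cauchy {n : ℕ} (x y : Fin n → ℝ) :
    (x ⬝ᵥ y) ^ 2 ≤ (x ⬝ᵥ x) * (y ⬝ᵥ y) := by
  have h := Finset.sum_mul_sq_le_sq_mul_sq Finset.univ x y
  simpa [dotProduct, pow_two] using h

lemma aux_frob_qf {n : ℕ} (E : Matrix (Fin n) (Fin n) ℝ) (x : Fin n → ℝ) :
    |x ⬝ᵥ (E *ᵥ x)| ≤ Real.sqrt (∑ i, ∑ j, E i j ^ 2) * (x ⬝ᵥ x) := by
  set S := ∑ i, ∑ j, E i j ^ 2 with hS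
  have hS0 : 0 ≤ S := by positivity
  have hxx : 0 ≤ x ⬝ᵥ x := aux_dot_nonneg x
  have h1 : (x ⬝ᵥ (E *ᵥ x)) ^ 2 ≤ (x ⬝ᵥ x) * ((E *ᵥ x) ⬝ᵥ (E *ᵥ x)) := aux_cauchy _ _
  have h2 : (E *ᵥ x) ⬝ᵥ (E *ᵥ x) ≤ S * (x ⬝ᵥ x) := by
    have hrow : ∀ i, ((E *ᵥ x) i) * ((E *ᵥ x) i) ≤ (∑ j, E i j ^ 2) * (x ⬝ᵥ x) := by
      intro i
      have h := Finset.sum_mul_sq_le_sq_mul_sq Finset.univ (E i) x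
      have he : (E *ᵥ x) i = ∑ j, E i j * x j := rfl
      rw [he]
      calc (∑ j, E i j * x j) * (∑ j, E i j * x j) = (∑ j, E i j * x j) ^ 2 := (pow_two _).symm
        _ ≤ (∑ j, E i j ^ 2) * (∑ j, x j ^ 2) := h
        _ = (∑ j, E i j ^ 2) * (x ⬝ᵥ x) := by simp [dotProduct, pow_two]
    calc (E *ᵥ x) ⬝ᵥ (E *ᵥ x) = ∑ i, ((E *ᵥ x) i) * ((E *ᵥ x) i) := rfl
      _ ≤ ∑ i, (∑ j, E i j ^ 2) * (x ⬝ᵥ x) := Finset.sum_le_sum fun i _ => hrow i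
      _ = S * (x ⬝ᵥ x) := by rw [hS, Finset.sum_mul]
  have h3 : (x ⬝ᵥ (E *ᵥ x)) ^ 2 ≤ S * (x ⬝ᵥ x) ^ 2 := by nlinarith
  calc |x ⬝ᵥ (E *ᵥ x)| = Real.sqrt ((x ⬝ᵥ (E *ᵥ x)) ^ 2) := (Real.sqrt_sq_eq_abs _).symm
    _ ≤ Real.sqrt (S * (x ⬝ᵥ x) ^ 2) := Real.sqrt_le_sqrt h3
    _ = Real.sqrt S * (x ⬝ᵥ x) := by rw [Real.sqrt_mul hS0, Real.sqrt_sq hxx]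

lemma aux_gram {p n : ℕ} (M : Matrix (Fin p) (Fin n) ℝ) (x : Fin n → ℝ) :
    x ⬝ᵥ ((Mᵀ * M) *ᵥ x) = (M *ᵥ x) ⬝ᵥ (M *ᵥ x) := by
  rw [← Matrix.mulVec_mulVec, Matrix.dotProduct_mulVec, Matrix.vecMul_transpose]

lemma aux_weyl {n k' : ℕ} (hk' : k' < n)
    (A B : Matrix (Fin n) (Fin n) ℝ)
    (evA : Fin n → ℝ) (vA : Fin n → Fin n → ℝ)
    (hvorth : ∀ i j, (∑ t, vA i t * vA j t) = if i = j then (1:ℝ) else 0)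
    (heigA : ∀ i, A *ᵥ vA i = evA i • vA i) (hevA : Antitone evA)
    (evB : Fin n → ℝ) (uB : Fin n → Fin n → ℝ)
    (huorth : ∀ i j, (∑ t, uB i t * uB j t) = if i = j then (1:ℝ) else 0)
    (heigB : ∀ i, B *ᵥ uB i = evB i • uB i) (hevB : Antitone evB) :
    evB ⟨k', hk'⟩ ≤ evA ⟨k', hk'⟩ + Real.sqrt (∑ i, ∑ j, (A - B) i j ^ 2) := by
  set S := Real.sqrt (∑ i, ∑ j, (A - B) i j ^ 2) with hSdef
  set M' : Matrix (Fin k') (Fin (k'+1)) ℝ :=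
    fun i j => vA (Fin.castLE hk'.le i) ⬝ᵥ uB (Fin.castLE hk' j) with hM'
  obtain ⟨c, hc0, hck⟩ : ∃ c : Fin (k'+1) → ℝ, c ≠ 0 ∧ M' *ᵥ c = 0 := by
    by_contra hcon
    push_neg at hcon
    have hinj : Function.Injective M'.mulVecLin := by
      rw [← LinearMap.ker_eq_bot, Submodule.eq_bot_iff]
      intro cc hcc
      by_contra hcc0
      exact hcon cc hcc0 hcc
    have hle := LinearMap.finrank_le_finrank_of_injective hinj
    simp [Module.finrank_fin_fun] at hle
  set c' : Fin n → ℝ := fun i => if h : (i:ℕ) < k'+1 then c ⟨i, h⟩ else 0 with hc'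
  set y : Fin n → ℝ := ∑ i, c' i • uB i with hy
  have hsupp : ∀ i : Fin n, ¬((i:ℕ) < k'+1) → c' i = 0 := fun i h => by simp only [hc', dif_neg h]
  have hyy : 0 < y ⬝ᵥ y := by
    rw [hy, aux_dot_sum_sum uB huorth]
    obtain ⟨j0, hj0⟩ : ∃ j0, c j0 ≠ 0 := by
      by_contra hall; push_neg at hall; exact hc0 (funext hall)
    have hidx : c' (Fin.castLE hk' j0) = c j0 := by
      simp [hc']
      intro h; exact absurd j0.isLt (by omega)
    refine Finset.sum_pos' (fun i _ => mul_self_nonneg _)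
      ⟨Fin.castLE hk' j0, Finset.mem_univ _, ?_⟩
    rw [hidx]; exact mul_self_pos.mpr hj0
  have horthy : ∀ i : Fin n, (i:ℕ) < k' → vA i ⬝ᵥ y = 0 := by
    intro i hi
    rw [hy, aux_dot_sum_right]
    set F : ℕ → ℝ := fun j => if h : j < n then c' ⟨j, h⟩ * (vA i ⬝ᵥ uB ⟨j, h⟩) else 0 with hF
    have e1 : ∑ j : Fin n, c' j * (vA i ⬝ᵥ uB j) = ∑ j : Fin n, F (j : ℕ) := by
      refine Finset.sum_congr rfl fun j _ => ?_
      simp [hF, j.isLt]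
    rw [e1, Fin.sum_univ_eq_sum_range F n]
    have e2 : ∑ j ∈ Finset.range n, F j = ∑ j ∈ Finset.range (k'+1), F j := by
      refine (Finset.sum_subset (Finset.range_subset_range.mpr hk') ?_).symm
      intro j hjn hjk
      have hj1 : j < n := Finset.mem_range.mp hjn
      have hj2 : ¬ (j < k'+1) := fun h => hjk (Finset.mem_range.mpr h)
      simp [hF, hj1, hsupp ⟨j, hj1⟩ hj2]
    rw [e2, ← Fin.sum_univ_eq_sum_range F (k'+1)]
    have e3 : ∀ j : Fin (k'+1), F (j : ℕ) = M' ⟨(i:ℕ), hi⟩ j * c j := by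
      intro j
      have hjn : (j : ℕ) < n := lt_of_lt_of_le j.isLt hk'
      have hvAi : vA i = vA (Fin.castLE hk'.le ⟨(i:ℕ), hi⟩) := by
        apply congrArg; exact Fin.ext (by simp)
      have huBj : uB ⟨(j:ℕ), hjn⟩ = uB (Fin.castLE hk' j) := by
        apply congrArg; exact Fin.ext (by simp)
      have hcj : c' ⟨(j:ℕ), hjn⟩ = c j := by
        simp [hc', j.isLt]
        intro h; exact absurd j.isLt (by omega)
      simp only [hF, hjn, dif_pos, hcj, hM']
      rw [← hvAi, huBj]
      ring
    rw [Finset.sum_congr rfl fun j _ => e3 j]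
    have := congrFun hck ⟨(i:ℕ), hi⟩
    simpa [Matrix.mulVec, dotProduct] using this
  have hB : evB ⟨k', hk'⟩ * (y ⬝ᵥ y) ≤ y ⬝ᵥ (B *ᵥ y) := by
    rw [hy, aux_qf_repr B evB uB huorth heigB, aux_dot_sum_sum uB huorth, Finset.mul_sum]
    refine Finset.sum_le_sum fun i _ => ?_
    by_cases h : (i:ℕ) < k'+1
    · have hle : evB ⟨k', hk'⟩ ≤ evB i := hevB (by rw [Fin.le_def]; exact Nat.lt_succ_iff.mp h)
      nlinarith [mul_self_nonneg (c' i)]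
    · simp [hsupp i h]
  have hA : y ⬝ᵥ (A *ᵥ y) ≤ evA ⟨k', hk'⟩ * (y ⬝ᵥ y) :=
    aux_qf_le hk' A evA vA hvorth heigA hevA y horthy
  have hEy := aux_frob_qf (A - B) y
  have hEy1 : -(S * (y ⬝ᵥ y)) ≤ y ⬝ᵥ ((A - B) *ᵥ y) := (abs_le.mp hEy).1
  have hsplit : y ⬝ᵥ (B *ᵥ y) = y ⬝ᵥ (A *ᵥ y) - y ⬝ᵥ ((A - B) *ᵥ y) := by
    rw [Matrix.sub_mulVec, dotProduct_sub]; ring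
  nlinarith [hB, hA, hEy1, hsplit, hyy]

/-- Core inequality of Prop. 2: ‖(I − Pₛ)Gᵀ‖₂² ≤ λ_{k+1} + 2 f ‖G‖_F². -/
theorem stmt10 (np m ne k : ℕ) (hk : k < ne)
    (G : Matrix (Fin np) (Fin ne) ℝ) (Gs : Matrix (Fin m) (Fin ne) ℝ)
    (f : ℝ) (hf : 0 ≤ f)
    (hfrob : frob (Gᵀ * G - Gsᵀ * Gs) ≤ f * (frob G) ^ 2)
    (evH : Fin ne → ℝ) (u : Fin ne → Fin ne → ℝ)
    (huorth : ∀ i j, (∑ t, u i t * u j t) = if i = j then (1:ℝ) else 0)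
    (heigH : ∀ i, (Gsᵀ * Gs).mulVec (u i) = evH i • u i)
    (hevH : Antitone evH)
    (P : Matrix (Fin ne) (Fin ne) ℝ) (hPsymm : Pᵀ = P) (hPidem : P * P = P)
    (hPtop : ∀ i : Fin ne, (i : ℕ) < k → P.mulVec (u i) = u i)
    (hPbot : ∀ i : Fin ne, k ≤ (i : ℕ) → P.mulVec (u i) = 0)
    (evG : Fin ne → ℝ) (v : Fin ne → Fin ne → ℝ)
    (hvorth : ∀ i j, (∑ t, v i t * v j t) = if i = j then (1:ℝ) else 0)
    (heigG : ∀ i, (Gᵀ * G).mulVec (v i) = evG i • v i)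
    (hevG : Antitone evG) :
    (specNorm ((1 - P) * Gᵀ)) ^ 2 ≤ evG ⟨k, hk⟩ + 2 * f * (frob G) ^ 2 := by
  classical
  set E : Matrix (Fin ne) (Fin ne) ℝ := Gᵀ * G - Gsᵀ * Gs with hE
  set S := Real.sqrt (∑ i, ∑ j, E i j ^ 2) with hSdef
  have hfrobE : frob E = S := rfl
  have hSle : S ≤ f * (frob G) ^ 2 := by rw [← hfrobE]; exact hfrob
  have hS0 : 0 ≤ S := Real.sqrt_nonneg _
  have hwey : evH ⟨k, hk⟩ ≤ evG ⟨k, hk⟩ + S :=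
    aux_weyl hk (Gᵀ * G) (Gsᵀ * Gs) evG v hvorth heigG hevG evH u huorth heigH hevH
  have hevG0 : 0 ≤ evG ⟨k, hk⟩ := by
    have h2 : v ⟨k, hk⟩ ⬝ᵥ ((Gᵀ * G) *ᵥ v ⟨k, hk⟩)
        = evG ⟨k, hk⟩ * (v ⟨k, hk⟩ ⬝ᵥ v ⟨k, hk⟩) := by
      rw [heigG ⟨k, hk⟩, dotProduct_smul]; rfl
    have h3 : v ⟨k, hk⟩ ⬝ᵥ v ⟨k, hk⟩ = 1 := by
      simpa [dotProduct] using hvorth ⟨k, hk⟩ ⟨k, hk⟩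
    have h4 : 0 ≤ v ⟨k, hk⟩ ⬝ᵥ ((Gᵀ * G) *ᵥ v ⟨k, hk⟩) := by
      rw [aux_gram G]; exact aux_dot_nonneg _
    rw [h2, h3, mul_one] at h4
    exact h4
  set C := evG ⟨k, hk⟩ + 2 * f * (frob G) ^ 2 with hC
  have hfg : 0 ≤ f * (frob G) ^ 2 := mul_nonneg hf (sq_nonneg _)
  have hC0 : 0 ≤ C := by rw [hC]; nlinarith
  have key : ∀ w : Fin np → ℝ,
      (((1 - P) * Gᵀ) *ᵥ w) ⬝ᵥ (((1 - P) * Gᵀ) *ᵥ w) ≤ C * (w ⬝ᵥ w) := by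
    intro w
    set z := Gᵀ *ᵥ w with hz
    set x := (1 - P) *ᵥ z with hx
    have hMw : ((1 - P) * Gᵀ) *ᵥ w = x := by rw [hx, hz, Matrix.mulVec_mulVec]
    rw [hMw]
    have h1Pt : (1 - P)ᵀ = 1 - P := by rw [Matrix.transpose_sub, Matrix.transpose_one, hPsymm]
    have hsq : (1 - P) * (1 - P) = 1 - P := by
      have hh : (1 - P) * (1 - P) = 1 - P - P + P * P := by noncomm_ring
      rw [hh, hPidem]; abel
    have hproj : (1 - P) *ᵥ x = x := by
      rw [hx, Matrix.mulVec_mulVec, hsq]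
    have hsymmdot : ∀ a b : Fin ne → ℝ, a ⬝ᵥ ((1 - P) *ᵥ b) = ((1 - P) *ᵥ a) ⬝ᵥ b := by
      intro a b
      rw [Matrix.dotProduct_mulVec]
      conv_lhs => rw [← h1Pt]
      rw [Matrix.vecMul_transpose]
    have hu0 : ∀ i : Fin ne, (i:ℕ) < k → u i ⬝ᵥ x = 0 := by
      intro i hi
      rw [hx, hsymmdot, Matrix.sub_mulVec, Matrix.one_mulVec, hPtop i hi]
      simp
    have hxx0 : 0 ≤ x ⬝ᵥ x := aux_dot_nonneg x
    have hGx : (G *ᵥ x) ⬝ᵥ (G *ᵥ x) ≤ C * (x ⬝ᵥ x) := by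
      rw [← aux_gram G x]
      have e1 : x ⬝ᵥ ((Gᵀ * G) *ᵥ x)
          = x ⬝ᵥ ((Gsᵀ * Gs) *ᵥ x) + x ⬝ᵥ (E *ᵥ x) := by
        rw [hE, Matrix.sub_mulVec, dotProduct_sub]; ring
      have e2 : x ⬝ᵥ ((Gsᵀ * Gs) *ᵥ x) ≤ evH ⟨k, hk⟩ * (x ⬝ᵥ x) :=
        aux_qf_le hk _ evH u huorth heigH hevH x hu0
      have e3 : x ⬝ᵥ (E *ᵥ x) ≤ S * (x ⬝ᵥ x) :=
        le_trans (le_abs_self _) (aux_frob_qf E x)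
      have e4 : evH ⟨k, hk⟩ * (x ⬝ᵥ x) ≤ (evG ⟨k, hk⟩ + S) * (x ⬝ᵥ x) :=
        mul_le_mul_of_nonneg_right hwey hxx0
      have e5 : S * (x ⬝ᵥ x) ≤ f * (frob G) ^ 2 * (x ⬝ᵥ x) :=
        mul_le_mul_of_nonneg_right hSle hxx0
      rw [e1, hC]
      nlinarith
    have hxw : x ⬝ᵥ x = (G *ᵥ x) ⬝ᵥ w := by
      nth_rewrite 2 [hx]
      rw [hsymmdot x z, hproj, hz, Matrix.dotProduct_mulVec, Matrix.vecMul_transpose]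
    have hcs : ((G *ᵥ x) ⬝ᵥ w) ^ 2 ≤ ((G *ᵥ x) ⬝ᵥ (G *ᵥ x)) * (w ⬝ᵥ w) := aux_cauchy _ _
    have hww : 0 ≤ w ⬝ᵥ w := aux_dot_nonneg w
    rcases eq_or_lt_of_le hxx0 with h0 | hpos
    · rw [← h0]; exact mul_nonneg hC0 hww
    · have h6 : (x ⬝ᵥ x) ^ 2 ≤ (C * (x ⬝ᵥ x)) * (w ⬝ᵥ w) := by
        calc (x ⬝ᵥ x) ^ 2 = ((G *ᵥ x) ⬝ᵥ w) ^ 2 := by rw [hxw]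
          _ ≤ ((G *ᵥ x) ⬝ᵥ (G *ᵥ x)) * (w ⬝ᵥ w) := hcs
          _ ≤ (C * (x ⬝ᵥ x)) * (w ⬝ᵥ w) := mul_le_mul_of_nonneg_right hGx hww
      nlinarith
  have hbound : specNorm ((1 - P) * Gᵀ) ≤ Real.sqrt C := by
    unfold specNorm
    refine ContinuousLinearMap.opNorm_le_bound _ (Real.sqrt_nonneg C) ?_
    intro w
    set M : Matrix (Fin ne) (Fin np) ℝ := (1 - P) * Gᵀ with hM
    set w' : Fin np → ℝ := (WithLp.equiv 2 (Fin np → ℝ)) w with hw'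
    have happ : (LinearMap.toContinuousLinearMap (Matrix.toEuclideanLin M)) w
        = (WithLp.equiv 2 (Fin ne → ℝ)).symm (M *ᵥ w') := by
      simp [Matrix.toEuclideanLin_apply, hw']
    rw [happ, EuclideanSpace.norm_eq, EuclideanSpace.norm_eq]
    have h1 : ∑ i, ‖((WithLp.equiv 2 (Fin ne → ℝ)).symm (M *ᵥ w')) i‖ ^ 2
        = (M *ᵥ w') ⬝ᵥ (M *ᵥ w') := by
      simp [WithLp.equiv_symm_apply, PiLp.toLp_apply, Real.norm_eq_abs, sq_abs, dotProduct, pow_two]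
    have h2 : ∑ i, ‖w i‖ ^ 2 = w' ⬝ᵥ w' := by
      simp [hw', Real.norm_eq_abs, sq_abs, dotProduct, pow_two]
    rw [h1, h2]
    calc Real.sqrt ((M *ᵥ w') ⬝ᵥ (M *ᵥ w'))
        ≤ Real.sqrt (C * (w' ⬝ᵥ w')) := Real.sqrt_le_sqrt (key w')
      _ = Real.sqrt C * Real.sqrt (w' ⬝ᵥ w') := Real.sqrt_mul hC0 _
  have hnn : 0 ≤ specNorm ((1 - P) * Gᵀ) := by unfold specNorm; exact norm_nonneg _
  calc (specNorm ((1 - P) * Gᵀ)) ^ 2 ≤ (Real.sqrt C) ^ 2 := by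
        exact pow_le_pow_left₀ hnn hbound 2
    _ = C := Real.sq_sqrt hC0
end

section
/- Let G be an n_p × n_e real matrix of rank r, l ∈ ℝ^{n_p}, μ ∈ ℝ^{n_e}, and let G̃ₛ be as in Proposition 2 with ‖GᵀG − G̃ₛᵀG̃ₛ‖_F ≤ f(k)‖G‖_F². If the predictor uses the orthogonal projection Bₛ onto the span of the top k right singular vectors of G̃ₛ, then the mean squared prediction error MSPE = ‖μᵀ(I − Bₛ)Gᵀl‖₂² + ‖(I − Bₛ)Gᵀl‖₂² satisfies MSPE ≤ (‖μ‖₂² + 1)(λ_{k+1} + 2 f(k) ‖G‖_F²) ‖l‖₂², where λ_{k+1} is the (k+1)-st largest eigenvalue of GᵀG. -/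
open Matrix Finset

/- ### Auxiliary lemmas -/

lemma gram_quad {m n : ℕ} (A : Matrix (Fin m) (Fin n) ℝ) (x : Fin n → ℝ) :
    x ⬝ᵥ (Aᵀ * A).mulVec x = ∑ i, (A.mulVec x i) ^ 2 := by
  rw [← Matrix.mulVec_mulVec, Matrix.dotProduct_mulVec, Matrix.vecMul_transpose]
  simp [dotProduct, sq]

lemma frob_quad {n : ℕ} (M : Matrix (Fin n) (Fin n) ℝ) (x : Fin n → ℝ) :
    |x ⬝ᵥ M.mulVec x| ≤ frob M * ∑ i, x i ^ 2 := by
  have h1 : x ⬝ᵥ M.mulVec x = ∑ p : Fin n × Fin n, M p.1 p.2 * (x p.1 * x p.2) := by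
    rw [Fintype.sum_prod_type]
    simp only [dotProduct, Matrix.mulVec, Finset.mul_sum]
    exact Finset.sum_congr rfl fun i _ => Finset.sum_congr rfl fun j _ => by ring
  have h2 := Finset.sum_mul_sq_le_sq_mul_sq Finset.univ
      (fun p : Fin n × Fin n => M p.1 p.2) (fun p : Fin n × Fin n => x p.1 * x p.2)
  have h3 : ∑ p : Fin n × Fin n, (x p.1 * x p.2) ^ 2 = (∑ i, x i ^ 2) ^ 2 := by
    rw [Fintype.sum_prod_type, sq (∑ i, x i ^ 2), Finset.sum_mul]
    exact Finset.sum_congr rfl fun i _ => by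
      rw [Finset.mul_sum]; exact Finset.sum_congr rfl fun j _ => by ring
  have h4 : ∑ p : Fin n × Fin n, M p.1 p.2 ^ 2 = ∑ i, ∑ j, (M i j) ^ 2 := by
    rw [Fintype.sum_prod_type]
  have hx : (0:ℝ) ≤ ∑ i, x i ^ 2 := Finset.sum_nonneg fun i _ => sq_nonneg _
  have habs : |x ⬝ᵥ M.mulVec x| = Real.sqrt ((x ⬝ᵥ M.mulVec x) ^ 2) :=
    (Real.sqrt_sq_eq_abs _).symm
  rw [habs, h1]
  calc Real.sqrt ((∑ p : Fin n × Fin n, M p.1 p.2 * (x p.1 * x p.2)) ^ 2)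
      ≤ Real.sqrt ((∑ i, ∑ j, (M i j) ^ 2) * (∑ i, x i ^ 2) ^ 2) := by
        apply Real.sqrt_le_sqrt; rw [← h3, ← h4]; exact h2
    _ = frob M * ∑ i, x i ^ 2 := by
        rw [Real.sqrt_mul (Finset.sum_nonneg fun i _ => Finset.sum_nonneg fun j _ => sq_nonneg (M i j) :
            (0:ℝ) ≤ ∑ i, ∑ j, (M i j) ^ 2),
          Real.sqrt_sq hx, frob]

lemma frob_neg' {n : ℕ} (M : Matrix (Fin n) (Fin n) ℝ) : frob (-M) = frob M := by
  simp [frob]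

lemma basis_expand {n : ℕ} (u : Fin n → Fin n → ℝ)
    (horth : ∀ i j, (∑ t, u i t * u j t) = if i = j then (1:ℝ) else 0)
    (x : Fin n → ℝ) :
    ∀ s, x s = ∑ i, (∑ t, u i t * x t) * u i s := by
  classical
  set U : Matrix (Fin n) (Fin n) ℝ := Matrix.of u with hU
  have hUU : U * Uᵀ = 1 := by
    ext i j; simp only [Matrix.mul_apply, hU, Matrix.of_apply, Matrix.transpose_apply,
      Matrix.one_apply]; exact horth i j
  have hUtU : Uᵀ * U = 1 := mul_eq_one_comm.mp hUU
  intro s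
  have h0 : ((Uᵀ * U).mulVec x) s = x s := by rw [hUtU, Matrix.one_mulVec]
  rw [← h0, ← Matrix.mulVec_mulVec]
  simp only [Matrix.mulVec, dotProduct, hU, Matrix.transpose_apply, Matrix.of_apply]
  exact Finset.sum_congr rfl fun i _ => by ring

lemma parseval {n : ℕ} (u : Fin n → Fin n → ℝ)
    (horth : ∀ i j, (∑ t, u i t * u j t) = if i = j then (1:ℝ) else 0)
    (x : Fin n → ℝ) :
    ∑ s, x s ^ 2 = ∑ i, (∑ t, u i t * x t) ^ 2 := by
  classical
  set U : Matrix (Fin n) (Fin n) ℝ := Matrix.of u with hU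
  have hUU : U * Uᵀ = 1 := by
    ext i j; simp only [Matrix.mul_apply, hU, Matrix.of_apply, Matrix.transpose_apply,
      Matrix.one_apply]; exact horth i j
  have hUtU : Uᵀ * U = 1 := mul_eq_one_comm.mp hUU
  have h := gram_quad U x
  rw [hUtU, Matrix.one_mulVec] at h
  simpa [dotProduct, sq, Matrix.mulVec, hU] using h

lemma quadform {n : ℕ} (u : Fin n → Fin n → ℝ)
    (horth : ∀ i j, (∑ t, u i t * u j t) = if i = j then (1:ℝ) else 0)
    (H : Matrix (Fin n) (Fin n) ℝ) (ev : Fin n → ℝ)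
    (heig : ∀ i, H.mulVec (u i) = ev i • u i) (x : Fin n → ℝ) :
    x ⬝ᵥ H.mulVec x = ∑ i, ev i * (∑ t, u i t * x t) ^ 2 := by
  have hx := basis_expand u horth x
  have key : ∀ s, H.mulVec x s = ∑ i, (∑ t, u i t * x t) * (ev i * u i s) := by
    intro s
    have h0 : H.mulVec x s = ∑ r, H s r * x r := rfl
    rw [h0]
    have h1 : ∀ r, H s r * x r = ∑ i, (∑ t, u i t * x t) * (H s r * u i r) := by
      intro r
      conv_lhs => rw [hx r]
      rw [Finset.mul_sum]
      exact Finset.sum_congr rfl fun i _ => by ring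
    rw [Finset.sum_congr rfl fun r _ => h1 r, Finset.sum_comm]
    refine Finset.sum_congr rfl fun i _ => ?_
    rw [← Finset.mul_sum]
    congr 1
    have h := congrFun (heig i) s
    simp only [Matrix.mulVec, dotProduct, Pi.smul_apply, smul_eq_mul] at h
    exact h
  calc x ⬝ᵥ H.mulVec x = ∑ s, x s * ∑ i, (∑ t, u i t * x t) * (ev i * u i s) := by
        exact Finset.sum_congr rfl fun s _ => by rw [key s]
    _ = ∑ s, ∑ i, ev i * (∑ t, u i t * x t) * (u i s * x s) := by
        refine Finset.sum_congr rfl fun s _ => ?_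
        rw [Finset.mul_sum]; exact Finset.sum_congr rfl fun i _ => by ring
    _ = ∑ i, ev i * (∑ t, u i t * x t) ^ 2 := by
        rw [Finset.sum_comm]
        refine Finset.sum_congr rfl fun i _ => ?_
        rw [← Finset.mul_sum]
        ring

/-- Proposition 2 (Σ = I): MSPE ≤ (‖μ‖₂² + 1)(λ_{k+1} + 2 f(k) ‖G‖_F²) ‖l‖₂². -/
theorem stmt12 (np m ne k : ℕ) (hk : k < ne)
    (G : Matrix (Fin np) (Fin ne) ℝ) (Gs : Matrix (Fin m) (Fin ne) ℝ)
    (l : Fin np → ℝ) (μ : Fin ne → ℝ)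
    (f : ℝ) (hf : 0 ≤ f)
    (hfrob : frob (Gᵀ * G - Gsᵀ * Gs) ≤ f * (frob G) ^ 2)
    (evH : Fin ne → ℝ) (u : Fin ne → Fin ne → ℝ)
    (huorth : ∀ i j, (∑ t, u i t * u j t) = if i = j then (1:ℝ) else 0)
    (heigH : ∀ i, (Gsᵀ * Gs).mulVec (u i) = evH i • u i)
    (hevH : Antitone evH)
    (Bs : Matrix (Fin ne) (Fin ne) ℝ) (hBsymm : Bsᵀ = Bs) (hBidem : Bs * Bs = Bs)
    (hBtop : ∀ i : Fin ne, (i : ℕ) < k → Bs.mulVec (u i) = u i)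
    (hBbot : ∀ i : Fin ne, k ≤ (i : ℕ) → Bs.mulVec (u i) = 0)
    (evG : Fin ne → ℝ) (v : Fin ne → Fin ne → ℝ)
    (hvorth : ∀ i j, (∑ t, v i t * v j t) = if i = j then (1:ℝ) else 0)
    (heigG : ∀ i, (Gᵀ * G).mulVec (v i) = evG i • v i)
    (hevG : Antitone evG) :
    (∑ j, μ j * ((1 - Bs) * Gᵀ).mulVec l j) ^ 2 +
      (∑ j, (((1 - Bs) * Gᵀ).mulVec l j) ^ 2) ≤
    ((∑ j, μ j ^ 2) + 1) * (evG ⟨k, hk⟩ + 2 * f * (frob G) ^ 2) * (∑ i, l i ^ 2) := by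
  classical
  set w : Fin ne → ℝ := Gᵀ.mulVec l with hw
  set y : Fin ne → ℝ := ((1 - Bs) * Gᵀ).mulVec l with hy
  have hyw : y = (1 - Bs).mulVec w := by rw [hy, hw, Matrix.mulVec_mulVec]
  set N : ℝ := ∑ j, y j ^ 2 with hN
  set L : ℝ := ∑ i, l i ^ 2 with hL
  set D : ℝ := frob (Gᵀ * G - Gsᵀ * Gs) with hD
  have hD0 : 0 ≤ D := Real.sqrt_nonneg _
  have hL0 : 0 ≤ L := Finset.sum_nonneg fun i _ => sq_nonneg _
  have hN0 : 0 ≤ N := Finset.sum_nonneg fun i _ => sq_nonneg _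
  have hPsym : (1 - Bs)ᵀ = 1 - Bs := by
    rw [Matrix.transpose_sub, Matrix.transpose_one, hBsymm]
  -- coefficients of y in the u-basis vanish for i < k
  have hcbot : ∀ i : Fin ne, (i : ℕ) < k → (∑ t, u i t * y t) = 0 := by
    intro i hi
    have h1 : (∑ t, u i t * y t) = u i ⬝ᵥ (1 - Bs).mulVec w := by rw [hyw]; rfl
    rw [h1, Matrix.dotProduct_mulVec]
    have h2 : u i ᵥ* (1 - Bs) = (1 - Bs).mulVec (u i) := by
      conv_lhs => rw [← hPsym]
      exact Matrix.vecMul_transpose _ _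
    have h3 : (1 - Bs).mulVec (u i) = 0 := by
      rw [Matrix.sub_mulVec, Matrix.one_mulVec, hBtop i hi, sub_self]
    rw [h2, h3, zero_dotProduct]
  -- N = y ⬝ w
  have hyy : y ⬝ᵥ y = N := by simp [hN, dotProduct, sq]
  have hNyw : N = y ⬝ᵥ w := by
    have hwsplit : w = y + Bs.mulVec w := by
      rw [hyw, Matrix.sub_mulVec, Matrix.one_mulVec]; abel
    have hzero : y ⬝ᵥ Bs.mulVec w = 0 := by
      rw [Matrix.dotProduct_mulVec]
      have h2 : y ᵥ* Bs = Bs.mulVec y := by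
        conv_lhs => rw [← hBsymm]
        exact Matrix.vecMul_transpose _ _
      have h3 : Bs.mulVec y = 0 := by
        rw [hyw, Matrix.mulVec_mulVec, Matrix.mul_sub, Matrix.mul_one, hBidem, sub_self,
          Matrix.zero_mulVec]
      rw [h2, h3, zero_dotProduct]
    calc N = y ⬝ᵥ y := hyy.symm
      _ = y ⬝ᵥ y + y ⬝ᵥ Bs.mulVec w := by rw [hzero, add_zero]
      _ = y ⬝ᵥ (y + Bs.mulVec w) := by rw [dotProduct_add]
      _ = y ⬝ᵥ w := by rw [← hwsplit]
  -- quadratic form bounds on y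
  have hquadH : y ⬝ᵥ (Gsᵀ * Gs).mulVec y ≤ evH ⟨k, hk⟩ * N := by
    rw [quadform u huorth _ evH heigH y]
    have hpars : N = ∑ i, (∑ t, u i t * y t) ^ 2 := parseval u huorth y
    rw [hpars, Finset.mul_sum]
    refine Finset.sum_le_sum fun i _ => ?_
    by_cases hik : (i : ℕ) < k
    · rw [hcbot i hik]; simp
    · have : (⟨k, hk⟩ : Fin ne) ≤ i := by
        rw [Fin.le_def]; exact le_of_not_gt hik
      exact mul_le_mul_of_nonneg_right (hevH this) (sq_nonneg _)
  have hGy : y ⬝ᵥ (Gᵀ * G).mulVec y ≤ (evH ⟨k, hk⟩ + D) * N := by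
    have hsplit : (Gᵀ * G) = (Gsᵀ * Gs) + (Gᵀ * G - Gsᵀ * Gs) := by abel
    have h1 : y ⬝ᵥ (Gᵀ * G).mulVec y
        = y ⬝ᵥ (Gsᵀ * Gs).mulVec y + y ⬝ᵥ (Gᵀ * G - Gsᵀ * Gs).mulVec y := by
      conv_lhs => rw [hsplit]
      rw [Matrix.add_mulVec, dotProduct_add]
    have h2 : y ⬝ᵥ (Gᵀ * G - Gsᵀ * Gs).mulVec y ≤ D * N :=
      le_trans (le_abs_self _) (frob_quad _ y)
    have hexp : (evH ⟨k, hk⟩ + D) * N = evH ⟨k, hk⟩ * N + D * N := by ring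
    rw [h1]; linarith [hquadH, h2]
  -- Cauchy-Schwarz: N² ≤ (y ⬝ (GᵀG) y) · L
  have hCS1 : N ^ 2 ≤ (y ⬝ᵥ (Gᵀ * G).mulVec y) * L := by
    have h1 : N = (G.mulVec y) ⬝ᵥ l := by
      rw [hNyw, hw, Matrix.dotProduct_mulVec, Matrix.vecMul_transpose]
    have h2 := Finset.sum_mul_sq_le_sq_mul_sq Finset.univ (fun i => G.mulVec y i) l
    have h3 : (G.mulVec y) ⬝ᵥ l = ∑ i, G.mulVec y i * l i := rfl
    rw [h1, h3, ← gram_quad G y] at *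
    exact h2
  -- evH ⟨k⟩ ≥ 0
  have hevHk0 : 0 ≤ evH ⟨k, hk⟩ := by
    have h1 := gram_quad Gs (u ⟨k, hk⟩)
    have h2 : u ⟨k, hk⟩ ⬝ᵥ (Gsᵀ * Gs).mulVec (u ⟨k, hk⟩) = evH ⟨k, hk⟩ := by
      rw [heigH]
      have : u ⟨k, hk⟩ ⬝ᵥ evH ⟨k, hk⟩ • u ⟨k, hk⟩
          = evH ⟨k, hk⟩ * ∑ t, u ⟨k, hk⟩ t * u ⟨k, hk⟩ t := by
        simp [dotProduct, Finset.mul_sum]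
        exact Finset.sum_congr rfl fun t _ => by ring
      rw [this, huorth]; simp
    rw [h2] at h1
    rw [h1]
    exact Finset.sum_nonneg fun i _ => sq_nonneg _
  -- Weyl-type inequality : evH ⟨k⟩ ≤ evG ⟨k⟩ + D
  have hWeyl : evH ⟨k, hk⟩ ≤ evG ⟨k, hk⟩ + D := by
    -- find a nonzero kernel vector
    set A : Matrix (Fin k) (Fin (k + 1)) ℝ :=
      fun j i => ∑ s, v (Fin.castLE hk.le j) s * u (Fin.castLE hk i) s with hA
    obtain ⟨c, hcmem, hc0⟩ : ∃ c : Fin (k + 1) → ℝ, A.mulVec c = 0 ∧ c ≠ 0 := by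
      have hrank := LinearMap.finrank_range_add_finrank_ker A.mulVecLin
      have hd1 : Module.finrank ℝ (Fin (k + 1) → ℝ) = k + 1 := by
        simp [Module.finrank_pi]
      have hd2 : Module.finrank ℝ (LinearMap.range A.mulVecLin) ≤ k := by
        have := Submodule.finrank_le (LinearMap.range A.mulVecLin)
        simpa [Module.finrank_pi] using this
      have hker : LinearMap.ker A.mulVecLin ≠ ⊥ := by
        intro hbot
        rw [hbot, finrank_bot, add_zero, hd1] at hrank
        omega
      obtain ⟨c, hc, hc0⟩ := (Submodule.ne_bot_iff _).mp hker
      exact ⟨c, by simpa [Matrix.mulVecLin_apply] using hc, hc0⟩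
    set x : Fin ne → ℝ := fun s => ∑ i : Fin (k + 1), c i * u (Fin.castLE hk i) s with hx
    set S : ℝ := ∑ t, x t ^ 2 with hS
    -- u-coefficients of x
    have hd : ∀ j : Fin ne, (∑ t, u j t * x t)
        = ∑ i : Fin (k + 1), c i * (if j = Fin.castLE hk i then (1:ℝ) else 0) := by
      intro j
      have h1 : ∀ t, u j t * x t = ∑ i : Fin (k + 1), c i * (u j t * u (Fin.castLE hk i) t) := by
        intro t
        rw [hx, Finset.mul_sum]
        exact Finset.sum_congr rfl fun i _ => by ring
      rw [Finset.sum_congr rfl fun t _ => h1 t, Finset.sum_comm]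
      exact Finset.sum_congr rfl fun i _ => by rw [← Finset.mul_sum, huorth]
    have hdc : ∀ i : Fin (k + 1), (∑ t, u (Fin.castLE hk i) t * x t) = c i := by
      intro i
      rw [hd]
      rw [Finset.sum_eq_single i]
      · simp
      · intro b _ hbi
        have : Fin.castLE hk i ≠ Fin.castLE hk b := by
          intro h; exact hbi (Fin.castLE_injective hk h).symm
        simp [this]
      · intro h; exact absurd (Finset.mem_univ i) h
    have hdhigh : ∀ j : Fin ne, k + 1 ≤ (j : ℕ) → (∑ t, u j t * x t) = 0 := by
      intro j hj
      rw [hd]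
      refine Finset.sum_eq_zero fun i _ => ?_
      have : j ≠ Fin.castLE hk i := by
        intro h
        have : (j : ℕ) = (i : ℕ) := by rw [h]; rfl
        omega
      simp [this]
    -- S > 0
    have hS0 : 0 < S := by
      obtain ⟨i0, hi0⟩ : ∃ i0, c i0 ≠ 0 := Function.ne_iff.mp hc0
      have hpars := parseval u huorth x
      have h1 : (∑ t, u (Fin.castLE hk i0) t * x t) ^ 2
          ≤ ∑ i, (∑ t, u i t * x t) ^ 2 :=
        Finset.single_le_sum (f := fun i : Fin ne => (∑ t, u i t * x t) ^ 2)
          (fun i _ => sq_nonneg _) (Finset.mem_univ (Fin.castLE hk i0))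
      rw [hdc i0] at h1
      have : (0:ℝ) < c i0 ^ 2 := by positivity
      rw [hS, hpars]
      linarith
    -- x ⬝ H x ≥ evH ⟨k⟩ * S
    have hHx : evH ⟨k, hk⟩ * S ≤ x ⬝ᵥ (Gsᵀ * Gs).mulVec x := by
      rw [quadform u huorth _ evH heigH x]
      have hpars := parseval u huorth x
      rw [hS, hpars, Finset.mul_sum]
      refine Finset.sum_le_sum fun j _ => ?_
      by_cases hjk : (j : ℕ) ≤ k
      · have : j ≤ (⟨k, hk⟩ : Fin ne) := by rw [Fin.le_def]; exact hjk
        exact mul_le_mul_of_nonneg_right (hevH this) (sq_nonneg _)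
      · rw [hdhigh j (by omega)]; simp
    -- v-coefficients of x vanish below k
    have hehigh : ∀ j : Fin ne, (j : ℕ) < k → (∑ t, v j t * x t) = 0 := by
      intro j hj
      have h1 : ∀ t, v j t * x t = ∑ i : Fin (k + 1), c i * (v j t * u (Fin.castLE hk i) t) := by
        intro t
        rw [hx, Finset.mul_sum]
        exact Finset.sum_congr rfl fun i _ => by ring
      rw [Finset.sum_congr rfl fun t _ => h1 t, Finset.sum_comm]
      have h2 := congrFun hcmem ⟨(j : ℕ), hj⟩
      have h3 : A.mulVec c ⟨(j : ℕ), hj⟩ = ∑ i : Fin (k + 1),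
          (∑ s, v j s * u (Fin.castLE hk i) s) * c i := by
        simp only [Matrix.mulVec, dotProduct, hA]
        exact Finset.sum_congr rfl fun i _ => by
          congr 2
      rw [h3] at h2
      simp only [Pi.zero_apply] at h2
      rw [← h2]
      exact Finset.sum_congr rfl fun i _ => by rw [← Finset.mul_sum]; ring
    -- x ⬝ (GᵀG) x ≤ evG ⟨k⟩ * S
    have hGx : x ⬝ᵥ (Gᵀ * G).mulVec x ≤ evG ⟨k, hk⟩ * S := by
      rw [quadform v hvorth _ evG heigG x]
      have hpars := parseval v hvorth x
      rw [hS, hpars, Finset.mul_sum]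
      refine Finset.sum_le_sum fun j _ => ?_
      by_cases hjk : (j : ℕ) < k
      · rw [hehigh j hjk]; simp
      · have : (⟨k, hk⟩ : Fin ne) ≤ j := by rw [Fin.le_def]; exact le_of_not_gt hjk
        exact mul_le_mul_of_nonneg_right (hevG this) (sq_nonneg _)
    -- difference bound
    have hdiff : x ⬝ᵥ (Gsᵀ * Gs - Gᵀ * G).mulVec x ≤ D * S := by
      have h1 := frob_quad (Gsᵀ * Gs - Gᵀ * G) x
      have h2 : frob (Gsᵀ * Gs - Gᵀ * G) = D := by
        rw [hD, ← frob_neg' (Gᵀ * G - Gsᵀ * Gs), neg_sub]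
      rw [h2] at h1
      exact le_trans (le_abs_self _) h1
    have hsum : x ⬝ᵥ (Gsᵀ * Gs).mulVec x
        = x ⬝ᵥ (Gᵀ * G).mulVec x + x ⬝ᵥ (Gsᵀ * Gs - Gᵀ * G).mulVec x := by
      have hsplit : (Gsᵀ * Gs) = (Gᵀ * G) + (Gsᵀ * Gs - Gᵀ * G) := by abel
      conv_lhs => rw [hsplit]
      rw [Matrix.add_mulVec, dotProduct_add]
    have hfinal : evH ⟨k, hk⟩ * S ≤ (evG ⟨k, hk⟩ + D) * S := by
      rw [hsum] at hHx
      have hexp : (evG ⟨k, hk⟩ + D) * S = evG ⟨k, hk⟩ * S + D * S := by ring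
      linarith [hGx, hdiff]
    exact le_of_mul_le_mul_right hfinal hS0
  -- combine: N ≤ (evG ⟨k⟩ + 2 f ‖G‖²) L
  have hDf : D ≤ f * (frob G) ^ 2 := hfrob
  have hNle : N ≤ (evH ⟨k, hk⟩ + D) * L := by
    rcases eq_or_lt_of_le hN0 with h | h
    · rw [← h]
      exact mul_nonneg (add_nonneg hevHk0 hD0) hL0
    · have h2 : N * N ≤ ((evH ⟨k, hk⟩ + D) * L) * N := by
        have h3 : (y ⬝ᵥ (Gᵀ * G).mulVec y) * L ≤ ((evH ⟨k, hk⟩ + D) * N) * L :=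
          mul_le_mul_of_nonneg_right hGy hL0
        have h4 : ((evH ⟨k, hk⟩ + D) * N) * L = ((evH ⟨k, hk⟩ + D) * L) * N := by ring
        have h5 : N * N = N ^ 2 := by ring
        linarith [hCS1]
      exact le_of_mul_le_mul_right h2 h
  have hNfin : N ≤ (evG ⟨k, hk⟩ + 2 * f * (frob G) ^ 2) * L := by
    have h1 : evH ⟨k, hk⟩ + D ≤ evG ⟨k, hk⟩ + 2 * f * (frob G) ^ 2 := by linarith
    exact le_trans hNle (mul_le_mul_of_nonneg_right h1 hL0)
  -- first term by Cauchy-Schwarz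
  have hfirst : (∑ j, μ j * y j) ^ 2 ≤ (∑ j, μ j ^ 2) * N :=
    Finset.sum_mul_sq_le_sq_mul_sq Finset.univ μ y
  have hM0 : 0 ≤ ∑ j, μ j ^ 2 := Finset.sum_nonneg fun j _ => sq_nonneg _
  have hmul := mul_le_mul_of_nonneg_left hNfin hM0
  have hexp : ((∑ j, μ j ^ 2) + 1) * (evG ⟨k, hk⟩ + 2 * f * (frob G) ^ 2) * L
      = (∑ j, μ j ^ 2) * ((evG ⟨k, hk⟩ + 2 * f * (frob G) ^ 2) * L)
        + (evG ⟨k, hk⟩ + 2 * f * (frob G) ^ 2) * L := by ring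
  linarith [hfirst, hNfin, hmul]
end
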